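/- arXiv:0809.0744 — 2 statements merged into one kernel-verified Lean document; each statement's English description precedes it below -/
import Mathlib

section
/- Let (X, d) be a compact quasihypermetric space and μ a signed Borel measure of total mass 1 such that d_μ(x) = c for all x ∈ X (μ is d-invariant with value c). Then I(μ) = c and I(ν) ≤ c for every signed Borel measure ν of total mass 1; that is, μ is maximal and M(X) = c. -/
/-!
If `ν` has mass one then `ν - μ` has mass zero, so by bilinearity and symmetry of the energy
`0 ≥ I(ν - μ) = I(ν) - 2 I(μ, ν) + I(μ)`. Both `I(μ, ν) = ∫ d_μ dν` and `I(μ) = ∫ d_μ dμ` equal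
`c`, because `d_μ ≡ c` and both measures have mass one; hence `I(ν) ≤ c = I(μ)`.
-/

open MeasureTheory

/-- Integral of a function against a finite signed Borel measure, via Jordan decomposition. -/
noncomputable def sInt {X : Type*} [MeasurableSpace X] (μ : SignedMeasure X) (f : X → ℝ) : ℝ :=
  (∫ x, f x ∂μ.toJordanDecomposition.posPart) - ∫ x, f x ∂μ.toJordanDecomposition.negPart

/-- Energy `I(μ, ν) = ∫∫ d(x,y) dμ(x) dν(y)` with respect to a kernel `d`. -/
noncomputable def en {X : Type*} [MeasurableSpace X] (d : X → X → ℝ)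
    (μ ν : SignedMeasure X) : ℝ :=
  sInt μ (fun x => sInt ν (fun y => d x y))

/-- The potential `d_μ(x) = ∫ d(x,y) dμ(y)`. -/
noncomputable def dPot {X : Type*} [MeasurableSpace X] (d : X → X → ℝ)
    (μ : SignedMeasure X) (x : X) : ℝ :=
  sInt μ (fun y => d x y)

/-- The set of energies `I(μ)` of signed Borel measures of total mass one. -/
noncomputable def MSet (X : Type*) [MetricSpace X] [MeasurableSpace X] : Set ℝ :=
  {r | ∃ μ : SignedMeasure X, μ Set.univ = (1 : ℝ) ∧ en (fun x y => dist x y) μ μ = r}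

open Function

theorem Continuous.integrable_of_compactSpace {Y : Type*} [TopologicalSpace Y] [CompactSpace Y]
    [MeasurableSpace Y] [OpensMeasurableSpace Y] {f : Y → ℝ} (hf : Continuous f) (m : Measure Y)
    [IsFiniteMeasure m] : Integrable f m :=
  hf.integrable_of_hasCompactSupport (HasCompactSupport.of_compactSpace f)

section SignedIntegral

variable {X : Type*} [MeasurableSpace X]

theorem sInt_const (μ : SignedMeasure X) (c : ℝ) : sInt μ (fun _ => c) = c * μ Set.univ := by
  rw [μ.apply_eq_posPart_real_sub_negPart_real MeasurableSet.univ]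
  simp only [sInt, integral_const, smul_eq_mul]
  ring

theorem sInt_congr_const {μ : SignedMeasure X} {f : X → ℝ} {c : ℝ} (hf : ∀ x, f x = c) :
    sInt μ f = c * μ Set.univ := by
  rw [show f = fun _ => c from funext hf, sInt_const]

variable [TopologicalSpace X] [CompactSpace X] [OpensMeasurableSpace X]

theorem sInt_sub (μ : SignedMeasure X) {f g : X → ℝ} (hf : Continuous f) (hg : Continuous g) :
    sInt μ (fun x => f x - g x) = sInt μ f - sInt μ g := by
  simp only [sInt, integral_sub (hf.integrable_of_compactSpace _) (hg.integrable_of_compactSpace _)]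
  ring

theorem sInt_eq_integral_sub_integral {μ : SignedMeasure X} {p n : Measure X}
    [IsFiniteMeasure p] [IsFiniteMeasure n] (h : μ = p.toSignedMeasure - n.toSignedMeasure)
    {f : X → ℝ} (hf : Continuous f) : sInt μ f = ∫ x, f x ∂p - ∫ x, f x ∂n := by
  set j := μ.toJordanDecomposition
  have hmeas : j.posPart + n = p + j.negPart := by
    rw [← Measure.toSignedMeasure_eq_toSignedMeasure_iff, Measure.toSignedMeasure_add,
      Measure.toSignedMeasure_add, ← sub_eq_sub_iff_add_eq_add, ← h]
    exact μ.toSignedMeasure_toJordanDecomposition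
  have hint := congrArg (fun m => ∫ x, f x ∂m) hmeas
  simp only [integral_add_measure (hf.integrable_of_compactSpace _)
    (hf.integrable_of_compactSpace _)] at hint
  simp only [sInt]
  linarith

theorem sInt_sub_measure (ν μ : SignedMeasure X) {f : X → ℝ} (hf : Continuous f) :
    sInt (ν - μ) f = sInt ν f - sInt μ f := by
  have h : ν - μ = (ν.toJordanDecomposition.posPart + μ.toJordanDecomposition.negPart).toSignedMeasure
      - (ν.toJordanDecomposition.negPart + μ.toJordanDecomposition.posPart).toSignedMeasure := by
    conv_lhs => rw [← ν.toSignedMeasure_toJordanDecomposition,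
      ← μ.toSignedMeasure_toJordanDecomposition]
    simp only [JordanDecomposition.toSignedMeasure, Measure.toSignedMeasure_add]
    abel
  rw [sInt_eq_integral_sub_integral h hf,
    integral_add_measure (hf.integrable_of_compactSpace _) (hf.integrable_of_compactSpace _),
    integral_add_measure (hf.integrable_of_compactSpace _) (hf.integrable_of_compactSpace _)]
  simp only [sInt]
  ring

end SignedIntegral

theorem en_eq_mul_of_dPot_eq_const {X : Type*} [MeasurableSpace X] {d : X → X → ℝ}
    {μ : SignedMeasure X} {c : ℝ} (hμ : ∀ x, dPot d μ x = c) (ν : SignedMeasure X) :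
    en d ν μ = c * ν Set.univ :=
  sInt_congr_const hμ

section Kernel

variable {X : Type*} [PseudoMetricSpace X] [CompactSpace X] [MeasurableSpace X]
  [OpensMeasurableSpace X] {d : X → X → ℝ}

theorem continuous_integral_kernel (hd : Continuous (uncurry d)) (m : Measure X)
    [IsFiniteMeasure m] : Continuous fun x => ∫ y, d x y ∂m := by
  simpa only [Measure.restrict_univ] using
    continuous_parametric_integral_of_continuous (μ := m) hd isCompact_univ

theorem continuous_dPot (hd : Continuous (uncurry d)) (μ : SignedMeasure X) :
    Continuous (dPot d μ) :=
  (continuous_integral_kernel hd _).sub (continuous_integral_kernel hd _)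

theorem dPot_sub (hd : Continuous (uncurry d)) (ν μ : SignedMeasure X) :
    dPot d (ν - μ) = dPot d ν - dPot d μ :=
  funext fun x => sInt_sub_measure ν μ (hd.uncurry_left x)

theorem en_sub_left (hd : Continuous (uncurry d)) (ν μ ρ : SignedMeasure X) :
    en d (ν - μ) ρ = en d ν ρ - en d μ ρ :=
  sInt_sub_measure ν μ (continuous_dPot hd ρ)

theorem en_sub_right (hd : Continuous (uncurry d)) (ρ ν μ : SignedMeasure X) :
    en d ρ (ν - μ) = en d ρ ν - en d ρ μ := by
  change sInt ρ (dPot d (ν - μ)) = sInt ρ (dPot d ν) - sInt ρ (dPot d μ)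
  rw [dPot_sub hd]
  exact sInt_sub ρ (continuous_dPot hd ν) (continuous_dPot hd μ)

theorem integral_integral_comm_of_symm (hd : Continuous (uncurry d))
    (hsymm : ∀ x y, d x y = d y x) (a b : Measure X) [IsFiniteMeasure a] [IsFiniteMeasure b] :
    ∫ x, ∫ y, d x y ∂b ∂a = ∫ x, ∫ y, d x y ∂a ∂b := by
  rw [integral_integral_swap (hd.integrable_of_compactSpace (a.prod b))]
  simp_rw [hsymm]

theorem en_comm (hd : Continuous (uncurry d)) (hsymm : ∀ x y, d x y = d y x)
    (μ ν : SignedMeasure X) : en d μ ν = en d ν μ := by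
  have hint (m m' : Measure X) [IsFiniteMeasure m] [IsFiniteMeasure m'] :=
    (continuous_integral_kernel hd m).integrable_of_compactSpace m'
  simp only [en, sInt, integral_sub (hint _ _) (hint _ _), integral_integral_comm_of_symm hd hsymm]
  ring

theorem en_le_of_dPot_eq_const (hd : Continuous (uncurry d)) (hsymm : ∀ x y, d x y = d y x)
    (hq : ∀ ν : SignedMeasure X, ν Set.univ = (0 : ℝ) → en d ν ν ≤ 0)
    {μ : SignedMeasure X} (hμ : μ Set.univ = (1 : ℝ)) {c : ℝ} (hinv : ∀ x, dPot d μ x = c)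
    {ν : SignedMeasure X} (hν : ν Set.univ = (1 : ℝ)) : en d ν ν ≤ c := by
  have hνμ : en d ν μ = c := by rw [en_eq_mul_of_dPot_eq_const hinv, hν, mul_one]
  have hμμ : en d μ μ = c := by rw [en_eq_mul_of_dPot_eq_const hinv, hμ, mul_one]
  have hσ := hq (ν - μ) (by rw [sub_apply, hν, hμ, sub_self])
  rw [en_sub_left hd, en_sub_right hd, en_sub_right hd, en_comm hd hsymm μ ν, hνμ, hμμ] at hσ
  linarith

end Kernel

/-- In a compact quasihypermetric space, a mass-one signed measure whose potential is
constant with value `c` has energy `c`, and `c` is the supremum `M(X)` of the energies. -/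
theorem stmt1 {X : Type*} [MetricSpace X] [CompactSpace X] [MeasurableSpace X] [BorelSpace X]
    (hq : ∀ ν : SignedMeasure X, ν Set.univ = (0 : ℝ) → en (fun x y => dist x y) ν ν ≤ 0)
    (μ : SignedMeasure X) (hμ : μ Set.univ = (1 : ℝ)) (c : ℝ)
    (hinv : ∀ x : X, dPot (fun x y => dist x y) μ x = c) :
    en (fun x y => dist x y) μ μ = c ∧ IsLUB (MSet X) c := by
  have hE : en (fun x y => dist x y) μ μ = c := by
    rw [en_eq_mul_of_dPot_eq_const hinv, hμ, mul_one]
  refine ⟨hE, ?_, fun b hb => hb ⟨μ, hμ, hE⟩⟩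
  rintro r ⟨ν, hν, rfl⟩
  exact en_le_of_dPot_eq_const continuous_dist dist_comm hq hμ hinv hν
end

section
/- For the interval X = [a, b] with a < b and the metric d(x, y) = |x − y|, one has M(X) = (b − a)/2, i.e., sup{∫∫ |x−y| dμ(x)dμ(y) : μ a signed Borel measure of total mass 1} = (b−a)/2. -/
open MeasureTheory

/-!
For `x, y ∈ [a, b]`, `|x - y|` is the length of the set of `t ∈ (a, b]` lying between `x` and `y`.
By Fubini this turns `I(μ)` into `∫_a^b 2 μ{x < t} μ{x ≥ t} dt`, and since the two masses add up
to `μ([a, b]) = 1` the integrand is at most `1/2`. The measure `(δ_a + δ_b)/2` attains `(b - a)/2`.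
-/

open Set
open scoped NNReal Interval

lemma sInt_toSignedMeasure {X : Type*} [MeasurableSpace X] (m : Measure X) [IsFiniteMeasure m]
    (f : X → ℝ) :
    sInt m.toSignedMeasure f = ∫ x, f x ∂m := by
  let j : JordanDecomposition X := ⟨m, 0, .zero_right⟩
  have hj : m.toSignedMeasure = j.toSignedMeasure := by
    simp [j, JordanDecomposition.toSignedMeasure]
  simp [sInt, hj, JordanDecomposition.toJordanDecomposition_toSignedMeasure, j]

lemma en_dist_half_dirac_add {X : Type*} [MetricSpace X] [MeasurableSpace X]
    [MeasurableSingletonClass X] (u v : X) :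
    en (fun x y => dist x y) ((2⁻¹ : ℝ≥0) • (Measure.dirac u + Measure.dirac v)).toSignedMeasure
      ((2⁻¹ : ℝ≥0) • (Measure.dirac u + Measure.dirac v)).toSignedMeasure = dist u v / 2 := by
  have hint : ∀ (z : X) (f : X → ℝ), Integrable f (Measure.dirac z) := fun z f =>
    integrable_dirac enorm_lt_top
  simp only [en, sInt_toSignedMeasure, integral_smul_nnreal_measure,
    integral_add_measure (hint _ _) (hint _ _), integral_dirac, dist_self, dist_comm v u,
    NNReal.smul_def, smul_eq_mul]
  push_cast
  ring

section CompactMetric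

variable {X : Type*} [MetricSpace X] [CompactSpace X] [MeasurableSpace X] [BorelSpace X]

lemma integrable_dist_prod (q r : Measure X) [IsFiniteMeasure q] [IsFiniteMeasure r] :
    Integrable (fun z : X × X => dist z.1 z.2) (q.prod r) :=
  continuous_dist.integrable_of_hasCompactSupport (.of_compactSpace _)

lemma en_dist_eq (μ ν : SignedMeasure X) :
    en (fun x y => dist x y) μ ν =
      (∫ z, dist z.1 z.2 ∂(μ.toJordanDecomposition.posPart.prod ν.toJordanDecomposition.posPart)
        - ∫ z, dist z.1 z.2 ∂(μ.toJordanDecomposition.posPart.prod ν.toJordanDecomposition.negPart))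
      - (∫ z, dist z.1 z.2 ∂(μ.toJordanDecomposition.negPart.prod ν.toJordanDecomposition.posPart)
        - ∫ z, dist z.1 z.2
            ∂(μ.toJordanDecomposition.negPart.prod ν.toJordanDecomposition.negPart)) := by
  simp only [en, sInt, integral_prod _ (integrable_dist_prod _ _)]
  rw [integral_sub (integrable_dist_prod _ _).integral_prod_left
      (integrable_dist_prod _ _).integral_prod_left,
    integral_sub (integrable_dist_prod _ _).integral_prod_left
      (integrable_dist_prod _ _).integral_prod_left]

end CompactMetric

section Interval

variable {a b : ℝ}

lemma abs_sub_eq_integral_indicator_uIoc {x y : ℝ} (hx : x ∈ Icc a b) (hy : y ∈ Icc a b) :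
    |x - y| = ∫ t in Ioc a b, (Ι x y).indicator 1 t := by
  have hsub : Ι x y ⊆ Ioc a b := fun t ht => by
    rw [mem_uIoc] at ht
    constructor <;> rcases ht with h | h <;> linarith [hx.1, hx.2, hy.1, hy.2, h.1, h.2]
  rw [integral_indicator_one measurableSet_uIoc, measureReal_restrict_apply measurableSet_uIoc,
    inter_eq_left.2 hsub, measureReal_def, Real.volume_uIoc, ENNReal.toReal_ofReal (abs_nonneg _),
    abs_sub_comm]

noncomputable def separatedMass (q r : Measure (Icc a b)) (t : ℝ) : ℝ :=
  (q.prod r).real {z | t ∈ Ι (z.1 : ℝ) z.2}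

lemma measurableSet_mem_uIoc :
    MeasurableSet {p : (Icc a b × Icc a b) × ℝ | p.2 ∈ Ι (p.1.1 : ℝ) p.1.2} := by
  simp only [uIoc, mem_Ioc, ofPred_and]
  exact (measurableSet_lt (by fun_prop) (by fun_prop)).inter
    (measurableSet_le (by fun_prop) (by fun_prop))

variable (q r : Measure (Icc a b))

lemma integral_indicator_mem_uIoc (t : ℝ) :
    ∫ z, (Ι (z.1 : ℝ) z.2).indicator (1 : ℝ → ℝ) t ∂(q.prod r) = separatedMass q r t := by
  have hS : MeasurableSet {z : Icc a b × Icc a b | t ∈ Ι (z.1 : ℝ) z.2} :=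
    measurable_prodMk_right measurableSet_mem_uIoc
  exact integral_indicator_one hS

variable [IsFiniteMeasure q] [IsFiniteMeasure r]

lemma integrable_indicator_mem_uIoc :
    Integrable (fun p : (Icc a b × Icc a b) × ℝ => (Ι (p.1.1 : ℝ) p.1.2).indicator (1 : ℝ → ℝ) p.2)
      ((q.prod r).prod (volume.restrict (Ioc a b))) :=
  (integrable_const (1 : ℝ)).indicator measurableSet_mem_uIoc

lemma integrableOn_separatedMass : IntegrableOn (separatedMass q r) (Ioc a b) := by
  have h := (integrable_indicator_mem_uIoc q r).integral_prod_right
  simp only [integral_indicator_mem_uIoc] at h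
  exact h

lemma integral_dist_prod_eq_integral_separatedMass :
    ∫ z, dist z.1 z.2 ∂(q.prod r) = ∫ t in Ioc a b, separatedMass q r t := by
  simp only [Subtype.dist_eq, Real.dist_eq,
    fun z : Icc a b × Icc a b => abs_sub_eq_integral_indicator_uIoc z.1.2 z.2.2]
  rw [integral_integral_swap (integrable_indicator_mem_uIoc q r)]
  simp only [integral_indicator_mem_uIoc]

lemma separatedMass_eq (t : ℝ) :
    separatedMass q r t = q.real {x | (x : ℝ) < t} * r.real {x | (x : ℝ) < t}ᶜ
      + q.real {x | (x : ℝ) < t}ᶜ * r.real {x | (x : ℝ) < t} := by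
  have hA : MeasurableSet {x : Icc a b | (x : ℝ) < t} :=
    measurableSet_lt (by fun_prop) (by fun_prop)
  have hsplit : {z : Icc a b × Icc a b | t ∈ Ι (z.1 : ℝ) z.2} =
      {x : Icc a b | (x : ℝ) < t} ×ˢ {x : Icc a b | (x : ℝ) < t}ᶜ
        ∪ {x : Icc a b | (x : ℝ) < t}ᶜ ×ˢ {x : Icc a b | (x : ℝ) < t} := by
    ext z
    simp only [mem_ofPred_eq, mem_uIoc, mem_union, mem_prod, mem_compl_iff, not_lt]
    tauto
  rw [separatedMass, hsplit, measureReal_union _ (hA.compl.prod hA), measureReal_prod_prod,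
    measureReal_prod_prod]
  exact Disjoint.set_prod_left disjoint_compl_right _ _

lemma en_dist_self_le (hab : a ≤ b) (μ : SignedMeasure (Icc a b)) :
    en (fun x y => dist x y) μ μ ≤ μ univ ^ 2 * (b - a) / 2 := by
  set p := μ.toJordanDecomposition.posPart
  set n := μ.toJordanDecomposition.negPart
  have hpoint : ∀ t, separatedMass p p t - separatedMass p n t
      - (separatedMass n p t - separatedMass n n t) ≤ μ univ ^ 2 / 2 := by
    intro t
    set A := {x : Icc a b | (x : ℝ) < t}
    have hA : MeasurableSet A := measurableSet_lt (by fun_prop) (by fun_prop)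
    have hcombo : separatedMass p p t - separatedMass p n t
        - (separatedMass n p t - separatedMass n n t) = 2 * (μ A * μ Aᶜ) := by
      simp only [separatedMass_eq, μ.apply_eq_posPart_real_sub_negPart_real hA,
        μ.apply_eq_posPart_real_sub_negPart_real hA.compl]
      ring
    have hmass : μ univ = μ A + μ Aᶜ := by
      rw [← union_compl_self A, VectorMeasure.of_union disjoint_compl_right hA hA.compl]
    rw [hcombo, hmass]
    linarith [four_mul_le_sq_add (μ A) (μ Aᶜ)]
  have hpp := integrableOn_separatedMass p p
  have hpn := integrableOn_separatedMass p n
  have hnp := integrableOn_separatedMass n p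
  have hnn := integrableOn_separatedMass n n
  calc en (fun x y => dist x y) μ μ
      = ∫ t in Ioc a b, (separatedMass p p t - separatedMass p n t
          - (separatedMass n p t - separatedMass n n t)) := by
        rw [en_dist_eq]
        simp only [integral_dist_prod_eq_integral_separatedMass]
        rw [← integral_sub hpp hpn, ← integral_sub hnp hnn, ← integral_sub]
        exacts [hpp.sub hpn, hnp.sub hnn]
    _ ≤ ∫ t in Ioc a b, μ univ ^ 2 / 2 :=
        setIntegral_mono_on ((hpp.sub hpn).sub (hnp.sub hnn))
          (integrableOn_const measure_Ioc_lt_top.ne) measurableSet_Ioc fun t _ => hpoint t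
    _ = μ univ ^ 2 * (b - a) / 2 := by
        rw [setIntegral_const, Real.volume_real_Ioc_of_le hab, smul_eq_mul]
        ring

end Interval

/-- For the interval `[a, b]` with the euclidean metric, `M([a,b]) = (b-a)/2`. -/
theorem stmt4 (a b : ℝ) (hab : a < b) :
    IsLUB (MSet (Set.Icc a b)) ((b - a) / 2) := by
  refine ⟨?_, fun r hr => hr ?_⟩
  · rintro r ⟨μ, hμ, rfl⟩
    simpa [hμ] using en_dist_self_le hab.le μ
  · let x : Icc a b := ⟨a, left_mem_Icc.2 hab.le⟩
    let y : Icc a b := ⟨b, right_mem_Icc.2 hab.le⟩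
    refine ⟨((2⁻¹ : ℝ≥0) • (Measure.dirac x + Measure.dirac y)).toSignedMeasure, ?_, ?_⟩
    · rw [Measure.toSignedMeasure_apply_measurable .univ]
      simp [measureReal_def, ENNReal.inv_two_add_inv_two]
    · rw [en_dist_half_dirac_add, Subtype.dist_eq, Real.dist_eq, abs_sub_comm,
        abs_of_nonneg (sub_nonneg.2 hab.le)]
end
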